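/- Let H be a finite-dimensional real inner product space, let A be a self-adjoint operator on H with A ≥ δI for some δ > 0, let β ∈ (0,1), and let μ > 0. Then A^{−β} = (2 μ^{1−β} sin(πβ)/π) ∫_{−1}^{1} (1−η)^{−β} (1+η)^{β−1} (μ(1−η) I + (1+η) A)⁻¹ dη, where A^{−β} is defined by the spectral theorem and the integral is a convergent improper operator-valued (Bochner) integral over (−1,1). -/

import Mathlib

open scoped RealInnerProductSpace
open MeasureTheory

/-! In the eigenbasis of `A` every operator in the formula is diagonal, so the identity reduces to
the scalar one for each eigenvalue `λ ≥ δ > 0`. The Möbius substitution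
`t = λ(1+η) / (μ(1-η) + (1+η)λ)`, which maps `(-1, 1)` onto `(0, 1)`, turns the scalar integral into
`B(β, 1-β) / (2 λ^β μ^{1-β})`, and `B(β, 1-β) = Γ(β) Γ(1-β) = π / sin(πβ)`. -/

namespace OrthonormalBasis

open InnerProductSpace

section Diagonal

variable {ι 𝕜 E : Type*} [Fintype ι] [RCLike 𝕜] [NormedAddCommGroup E] [InnerProductSpace 𝕜 E]
  (e : OrthonormalBasis ι 𝕜 E)

noncomputable def diagonal (d : ι → 𝕜) : E →L[𝕜] E := ∑ i, d i • rankOne 𝕜 (e i) (e i)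

@[simp]
lemma diagonal_apply_self (d : ι → 𝕜) (j : ι) : e.diagonal d (e j) = d j • e j := by
  classical
  simp [diagonal, e.inner_eq_ite, ite_smul]

lemma eq_diagonal_of_apply_self {T : E →L[𝕜] E} {d : ι → 𝕜} (hT : ∀ i, T (e i) = d i • e i) :
    T = e.diagonal d :=
  ContinuousLinearMap.coe_injective <| e.toBasis.ext fun i => by simp [hT]

lemma diagonal_mul_diagonal (d d' : ι → 𝕜) :
    e.diagonal d * e.diagonal d' = e.diagonal (d * d') :=
  e.eq_diagonal_of_apply_self fun i => by simp [smul_smul, mul_comm]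

lemma diagonal_one : e.diagonal 1 = 1 :=
  (e.eq_diagonal_of_apply_self (T := 1) fun i => by simp).symm

lemma smul_diagonal (c : 𝕜) (d : ι → 𝕜) : c • e.diagonal d = e.diagonal (c • d) :=
  e.eq_diagonal_of_apply_self fun i => by simp [smul_smul]

lemma inverse_diagonal {d : ι → 𝕜} (hd : ∀ i, d i ≠ 0) :
    Ring.inverse (e.diagonal d) = e.diagonal d⁻¹ := by
  have hdd : d * d⁻¹ = 1 := funext fun i => mul_inv_cancel₀ (hd i)
  have hd'd : d⁻¹ * d = 1 := funext fun i => inv_mul_cancel₀ (hd i)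
  exact Ring.inverse_unit ⟨e.diagonal d, e.diagonal d⁻¹,
    by rw [diagonal_mul_diagonal, hdd, diagonal_one],
    by rw [diagonal_mul_diagonal, hd'd, diagonal_one]⟩

end Diagonal

section Integral

variable {ι E α : Type*} [Fintype ι] [NormedAddCommGroup E] [InnerProductSpace ℝ E]
  (e : OrthonormalBasis ι ℝ E) [MeasurableSpace α] {μ : Measure α}

lemma integrable_diagonal {f : α → ι → ℝ} (hf : ∀ i, Integrable (fun a => f a i) μ) :
    Integrable (fun a => e.diagonal (f a)) μ := by
  unfold diagonal
  exact integrable_finsetSum (f := fun i a => f a i • rankOne ℝ (e i) (e i)) _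
    fun i _ => (hf i).smul_const _

lemma integral_diagonal {f : α → ι → ℝ} (hf : ∀ i, Integrable (fun a => f a i) μ) :
    ∫ a, e.diagonal (f a) ∂μ = e.diagonal (fun i => ∫ a, f a i ∂μ) := by
  have : FiniteDimensional ℝ E := e.toBasis.finiteDimensional_of_finite
  unfold diagonal
  rw [integral_finsetSum _ fun i _ => (hf i).smul_const _]
  simp only [integral_smul_const]

end Integral

end OrthonormalBasis

open Set Real

lemma ofReal_rpow_mul_one_sub_rpow {t : ℝ} (ht : t ∈ Icc (0 : ℝ) 1) (u v : ℝ) :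
    ((t ^ (u - 1) * (1 - t) ^ (v - 1) : ℝ) : ℂ)
      = (t : ℂ) ^ ((u : ℂ) - 1) * (1 - (t : ℂ)) ^ ((v : ℂ) - 1) := by
  rw [Complex.ofReal_mul, Complex.ofReal_cpow ht.1, Complex.ofReal_cpow (sub_nonneg.2 ht.2)]
  push_cast
  rfl

lemma integrableOn_rpow_mul_one_sub_rpow {u v : ℝ} (hu : 0 < u) (hv : 0 < v) :
    IntegrableOn (fun t : ℝ => t ^ (u - 1) * (1 - t) ^ (v - 1)) (Ioo 0 1) := by
  have h : IntegrableOn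
      (fun t : ℝ => ((t : ℂ) ^ ((u : ℂ) - 1) * (1 - (t : ℂ)) ^ ((v : ℂ) - 1)).re) (Ioc 0 1) :=
    ((intervalIntegrable_iff_integrableOn_Ioc_of_le zero_le_one).1
      (Complex.betaIntegral_convergent (by simpa) (by simpa))).re
  refine (h.mono_set Ioo_subset_Ioc_self).congr_fun (fun t ht => ?_) measurableSet_Ioo
  simp only [← ofReal_rpow_mul_one_sub_rpow (Ioo_subset_Icc_self ht), Complex.ofReal_re]

lemma integral_rpow_mul_one_sub_rpow {u v : ℝ} (hu : 0 < u) (hv : 0 < v) :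
    ∫ t in Ioo (0 : ℝ) 1, t ^ (u - 1) * (1 - t) ^ (v - 1)
      = Gamma u * Gamma v / Gamma (u + v) := by
  apply Complex.ofReal_injective
  rw [← integral_complex_ofReal, setIntegral_congr_fun measurableSet_Ioo
    (fun t ht => ofReal_rpow_mul_one_sub_rpow (Ioo_subset_Icc_self ht) u v),
    ← integral_Ioc_eq_integral_Ioo, ← intervalIntegral.integral_of_le zero_le_one,
    ← Complex.betaIntegral, Complex.betaIntegral_eq_Gamma_mul_div _ _ (by simpa) (by simpa),
    ← Complex.ofReal_add]
  simp only [Complex.Gamma_ofReal, Complex.ofReal_mul, Complex.ofReal_div]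

lemma integral_rpow_sub_one_mul_one_sub_rpow_neg {β : ℝ} (hβ : β ∈ Ioo (0 : ℝ) 1) :
    ∫ t in Ioo (0 : ℝ) 1, t ^ (β - 1) * (1 - t) ^ (-β) = π / sin (π * β) := by
  have h := integral_rpow_mul_one_sub_rpow hβ.1 (sub_pos.2 hβ.2)
  rw [sub_sub_cancel_left, add_sub_cancel, Gamma_one, div_one, Gamma_mul_Gamma_one_sub] at h
  exact h

section Substitution

variable {μ l : ℝ}

lemma moebius_denom_pos (hμ : 0 < μ) (hl : 0 < l) {η : ℝ} (hη : η ∈ Ioo (-1 : ℝ) 1) :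
    0 < μ * (1 - η) + (1 + η) * l := by
  obtain ⟨h₁, h₂⟩ := hη
  nlinarith

lemma bijOn_moebius (hμ : 0 < μ) (hl : 0 < l) :
    BijOn (fun η => l * (1 + η) / (μ * (1 - η) + (1 + η) * l)) (Ioo (-1) 1) (Ioo 0 1) := by
  have := hμ.ne'
  have := hl.ne'
  refine InvOn.bijOn (f' := fun t => (t * μ - (1 - t) * l) / (t * μ + (1 - t) * l))
    ⟨fun η ⟨h₁, h₂⟩ => ?_, fun t ⟨h₀, h₁⟩ => ?_⟩ (fun η ⟨h₁, h₂⟩ => ?_) (fun t ⟨h₀, h₁⟩ => ?_)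
  · have hD : μ * (1 - η) + (1 + η) * l ≠ 0 := by nlinarith
    dsimp only
    generalize hD' : μ * (1 - η) + (1 + η) * l = D at hD ⊢
    field_simp
    subst hD'
    ring_nf
    field_simp
  · have hD : t * μ + (1 - t) * l ≠ 0 := by nlinarith
    dsimp only
    generalize hD' : t * μ + (1 - t) * l = D at hD ⊢
    field_simp
    subst hD'
    ring_nf
    field_simp
  · have hD : 0 < μ * (1 - η) + (1 + η) * l := by nlinarith
    constructor
    · exact div_pos (by nlinarith) hD
    · rw [div_lt_one hD]; nlinarith
  · have hD : 0 < t * μ + (1 - t) * l := by nlinarith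
    constructor
    · rw [lt_div_iff₀ hD]; nlinarith
    · rw [div_lt_one hD]; nlinarith

lemma hasDerivAt_moebius {η : ℝ} (h : μ * (1 - η) + (1 + η) * l ≠ 0) :
    HasDerivAt (fun η => l * (1 + η) / (μ * (1 - η) + (1 + η) * l))
      (2 * l * μ / (μ * (1 - η) + (1 + η) * l) ^ 2) η := by
  have hnum : HasDerivAt (fun η => l * (1 + η)) (l * 1) η :=
    ((hasDerivAt_id' η).const_add 1).const_mul l
  have hden : HasDerivAt (fun η => μ * (1 - η) + (1 + η) * l) (μ * -1 + 1 * l) η :=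
    (((hasDerivAt_id' η).const_sub 1).const_mul μ).add
      (((hasDerivAt_id' η).const_add 1).mul_const l)
  exact (hnum.div hden h).congr_deriv (by ring)

lemma abs_deriv_mul_beta_kernel_moebius {β η : ℝ} (hμ : 0 < μ) (hl : 0 < l)
    (hη : η ∈ Ioo (-1 : ℝ) 1) :
    |2 * l * μ / (μ * (1 - η) + (1 + η) * l) ^ 2| *
        ((l * (1 + η) / (μ * (1 - η) + (1 + η) * l)) ^ (β - 1) *
          (1 - l * (1 + η) / (μ * (1 - η) + (1 + η) * l)) ^ (-β))
      = 2 * l ^ β * μ ^ (1 - β) *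
        ((1 - η) ^ (-β) * (1 + η) ^ (β - 1) * (μ * (1 - η) + (1 + η) * l)⁻¹) := by
  have hD := moebius_denom_pos hμ hl hη
  obtain ⟨h₁, h₂⟩ := hη
  have hm : 0 < 1 - η := by linarith
  have hp : 0 < 1 + η := by linarith
  have hcompl : 1 - l * (1 + η) / (μ * (1 - η) + (1 + η) * l)
      = μ * (1 - η) / (μ * (1 - η) + (1 + η) * l) := by
    field_simp
    ring
  rw [hcompl, abs_of_pos (by positivity), div_rpow (by positivity) hD.le,
    div_rpow (by positivity) hD.le, mul_rpow hl.le hp.le, mul_rpow hμ.le hm.le,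
    rpow_sub_one hl.ne', rpow_sub_one hD.ne', rpow_neg hμ.le, rpow_neg hD.le,
    rpow_sub hμ, rpow_one]
  have := rpow_pos_of_pos hD β
  have := rpow_pos_of_pos hμ β
  have := rpow_pos_of_pos hl β
  field_simp

variable {β : ℝ}

lemma integrableOn_balakrishnan_kernel (hβ : β ∈ Ioo (0 : ℝ) 1) (hμ : 0 < μ) (hl : 0 < l) :
    IntegrableOn (fun η => (1 - η) ^ (-β) * (1 + η) ^ (β - 1) * (μ * (1 - η) + (1 + η) * l)⁻¹)
      (Ioo (-1) 1) := by
  have hφ := bijOn_moebius hμ hl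
  have hC : 0 < 2 * l ^ β * μ ^ (1 - β) := by positivity
  rw [IntegrableOn, ← integrable_const_mul_iff hC.ne'.isUnit]
  refine ((integrableOn_image_iff_integrableOn_abs_deriv_smul measurableSet_Ioo
    (fun η hη => (hasDerivAt_moebius (moebius_denom_pos hμ hl hη).ne').hasDerivWithinAt)
    hφ.injOn (fun t => t ^ (β - 1) * (1 - t) ^ (-β))).1 ?_).congr_fun
    (fun η hη => abs_deriv_mul_beta_kernel_moebius hμ hl hη) measurableSet_Ioo
  rw [hφ.image_eq]
  simpa [sub_sub_cancel_left] using integrableOn_rpow_mul_one_sub_rpow hβ.1 (sub_pos.2 hβ.2)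

lemma integral_balakrishnan_kernel (hβ : β ∈ Ioo (0 : ℝ) 1) (hμ : 0 < μ) (hl : 0 < l) :
    2 * μ ^ (1 - β) * sin (π * β) / π *
      ∫ η in Ioo (-1 : ℝ) 1, (1 - η) ^ (-β) * (1 + η) ^ (β - 1) * (μ * (1 - η) + (1 + η) * l)⁻¹
      = l ^ (-β) := by
  have hφ := bijOn_moebius hμ hl
  have key := integral_image_eq_integral_abs_deriv_smul measurableSet_Ioo
    (fun η hη => (hasDerivAt_moebius (moebius_denom_pos hμ hl hη).ne').hasDerivWithinAt)
    hφ.injOn (fun t => t ^ (β - 1) * (1 - t) ^ (-β))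
  simp only [smul_eq_mul] at key
  rw [hφ.image_eq, integral_rpow_sub_one_mul_one_sub_rpow_neg hβ, setIntegral_congr_fun
    measurableSet_Ioo (fun η hη => abs_deriv_mul_beta_kernel_moebius hμ hl hη),
    integral_const_mul] at key
  set I := ∫ η in Ioo (-1 : ℝ) 1,
    (1 - η) ^ (-β) * (1 + η) ^ (β - 1) * (μ * (1 - η) + (1 + η) * l)⁻¹
  have hsin : 0 < sin (π * β) :=
    sin_pos_of_pos_of_lt_pi (mul_pos pi_pos hβ.1) (mul_lt_of_lt_one_right pi_pos hβ.2)
  have := rpow_pos_of_pos hμ (1 - β)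
  have := rpow_pos_of_pos hl β
  calc 2 * μ ^ (1 - β) * sin (π * β) / π * I
      = sin (π * β) / π * (2 * l ^ β * μ ^ (1 - β) * I) / l ^ β := by field_simp
    _ = (l ^ β)⁻¹ := by rw [← key]; field_simp
    _ = l ^ (-β) := (rpow_neg hl.le β).symm

end Substitution

theorem balakrishnan_formula_finite_interval_general
    {H : Type*} [NormedAddCommGroup H] [InnerProductSpace ℝ H]
    (A : H →L[ℝ] H)
    (δ : ℝ) (hδ : 0 < δ)
    (hAδ : ∀ x : H, δ * ‖x‖ ^ 2 ≤ ⟪A x, x⟫)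
    (β : ℝ) (hβ : β ∈ Set.Ioo (0 : ℝ) 1)
    (μ : ℝ) (hμ : 0 < μ)
    -- spectral decomposition of `A` and the spectral definition of `A^{−β}`
    (n : ℕ) (e : OrthonormalBasis (Fin n) ℝ H) (lam : Fin n → ℝ)
    (hAe : ∀ k, A (e k) = lam k • e k)
    (Aneg : H →L[ℝ] H)
    (hAneg : ∀ k, Aneg (e k) = (lam k ^ (-β)) • e k) :
    IntegrableOn
        (fun η : ℝ => ((1 - η) ^ (-β) * (1 + η) ^ (β - 1)) •
          Ring.inverse ((μ * (1 - η)) • (1 : H →L[ℝ] H) + (1 + η) • A))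
        (Set.Ioo (-1) 1) volume ∧
      Aneg = (2 * μ ^ (1 - β) * Real.sin (Real.pi * β) / Real.pi) •
        ∫ η in Set.Ioo (-1 : ℝ) 1,
          ((1 - η) ^ (-β) * (1 + η) ^ (β - 1)) •
            Ring.inverse ((μ * (1 - η)) • (1 : H →L[ℝ] H) + (1 + η) • A) := by
  have hlam : ∀ k, 0 < lam k := fun k => by
    have h := hAδ (e k)
    rw [hAe, real_inner_smul_left, real_inner_self_eq_norm_sq, e.orthonormal.1 k] at h
    linarith
  have hint k := integrableOn_balakrishnan_kernel hβ hμ (hlam k)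
  have hresolvent : ∀ η ∈ Set.Ioo (-1 : ℝ) 1,
      ((1 - η) ^ (-β) * (1 + η) ^ (β - 1)) •
          Ring.inverse ((μ * (1 - η)) • (1 : H →L[ℝ] H) + (1 + η) • A)
        = e.diagonal fun k =>
          (1 - η) ^ (-β) * (1 + η) ^ (β - 1) * (μ * (1 - η) + (1 + η) * lam k)⁻¹ := by
    intro η hη
    have hB : (μ * (1 - η)) • (1 : H →L[ℝ] H) + (1 + η) • A
        = e.diagonal fun k => μ * (1 - η) + (1 + η) * lam k :=
      e.eq_diagonal_of_apply_self fun k => by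
        simp only [add_apply, smul_apply, one_apply_eq_self, hAe, smul_smul, ← add_smul]
    rw [hB, e.inverse_diagonal fun k => (moebius_denom_pos hμ (hlam k) hη).ne', e.smul_diagonal]
    rfl
  refine ⟨IntegrableOn.congr_fun (e.integrable_diagonal hint)
    (fun η hη => (hresolvent η hη).symm) measurableSet_Ioo, ?_⟩
  rw [setIntegral_congr_fun measurableSet_Ioo hresolvent, e.integral_diagonal hint,
    e.smul_diagonal, e.eq_diagonal_of_apply_self hAneg]
  congr 1
  funext k
  exact (integral_balakrishnan_kernel hβ hμ (hlam k)).symm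

/-- Integral representation of `A^{−β}` obtained from the Balakrishnan formula by
the change of variable `θ = μ(1−η)/(1+η)`:
`A^{−β} = (2 μ^{1−β} sin(πβ)/π) ∫_{−1}^{1} (1−η)^{−β}(1+η)^{β−1}
(μ(1−η)I + (1+η)A)⁻¹ dη`. -/
theorem balakrishnan_formula_finite_interval
    {H : Type*} [NormedAddCommGroup H] [InnerProductSpace ℝ H] [FiniteDimensional ℝ H]
    (A : H →L[ℝ] H)
    (hAsym : ∀ x y : H, ⟪A x, y⟫ = ⟪x, A y⟫)
    (δ : ℝ) (hδ : 0 < δ)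
    (hAδ : ∀ x : H, δ * ‖x‖ ^ 2 ≤ ⟪A x, x⟫)
    (β : ℝ) (hβ : β ∈ Set.Ioo (0 : ℝ) 1)
    (μ : ℝ) (hμ : 0 < μ)
    -- spectral decomposition of `A` and the spectral definition of `A^{−β}`
    (n : ℕ) (e : OrthonormalBasis (Fin n) ℝ H) (lam : Fin n → ℝ)
    (hAe : ∀ k, A (e k) = lam k • e k)
    (Aneg : H →L[ℝ] H)
    (hAneg : ∀ k, Aneg (e k) = (lam k ^ (-β)) • e k) :
    IntegrableOn
        (fun η : ℝ => ((1 - η) ^ (-β) * (1 + η) ^ (β - 1)) •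
          Ring.inverse ((μ * (1 - η)) • (1 : H →L[ℝ] H) + (1 + η) • A))
        (Set.Ioo (-1) 1) volume ∧
      Aneg = (2 * μ ^ (1 - β) * Real.sin (Real.pi * β) / Real.pi) •
        ∫ η in Set.Ioo (-1 : ℝ) 1,
          ((1 - η) ^ (-β) * (1 + η) ^ (β - 1)) •
            Ring.inverse ((μ * (1 - η)) • (1 : H →L[ℝ] H) + (1 + η) • A) :=
  balakrishnan_formula_finite_interval_general A δ hδ hAδ β hβ μ hμ n e lam hAe Aneg hAneg
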